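/- Let U = ℂ \ {μ ∈ ℂ : μ² ∈ [1/4, ∞)} and define z₋(μ) = (1 - √(1 - 4μ²))/(2μ) for μ ≠ 0 (extended by z₋(0) = 0, using the principal branch of the square root). Then z₋ is holomorphic on U, z₋(0) = 0, z₋'(0) = 1, and z₋(μ)² - z₋(μ)/μ + 1 = 0 for all nonzero μ ∈ U. -/
import Mathlib


open Complex

/-- The branch `z₋(μ) = (1 - √(1-4μ²))/(2μ)`, with the principal square root,
extended by `z₋(0) = 0`. -/
noncomputable def zminus (μ : ℂ) : ℂ :=
  if μ = 0 then 0 else (1 - (1 - 4 * μ ^ 2) ^ ((1 : ℂ) / 2)) / (2 * μ)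

lemma sq_sqrt' (z : ℂ) : (z ^ ((1 : ℂ) / 2)) ^ 2 = z := by
  have := Complex.cpow_nat_inv_pow z (n := 2) (by norm_num)
  simp only [one_div] at this ⊢; exact this

lemma one_add_sqrt_ne (μ : ℂ) (hμ : μ ≠ 0) :
    1 + (1 - 4 * μ ^ 2) ^ ((1 : ℂ) / 2) ≠ 0 := by
  intro h
  have hs : (1 - 4 * μ ^ 2) ^ ((1 : ℂ) / 2) = -1 := by linear_combination h
  have h2 := sq_sqrt' (1 - 4 * μ ^ 2)
  rw [hs] at h2
  have : μ ^ 2 = 0 := by linear_combination ((1:ℂ)/4) * h2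
  exact hμ (pow_eq_zero_iff (by norm_num) |>.mp this)

lemma zminus_eq (μ : ℂ) :
    zminus μ = 2 * μ / (1 + (1 - 4 * μ ^ 2) ^ ((1 : ℂ) / 2)) := by
  by_cases hμ : μ = 0
  · simp [zminus, hμ]
  · have hden := one_add_sqrt_ne μ hμ
    have hs := sq_sqrt' (1 - 4 * μ ^ 2)
    rw [zminus, if_neg hμ]
    field_simp
    linear_combination -hs

lemma slit_of_mem (U : Set ℂ)
    (hU : U = {μ : ℂ | ¬ ∃ t : ℝ, (1/4 : ℝ) ≤ t ∧ μ ^ 2 = (t : ℂ)})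
    {μ : ℂ} (hμ : μ ∈ U) : (1 - 4 * μ ^ 2) ∈ Complex.slitPlane := by
  rw [hU] at hμ
  rw [Complex.mem_slitPlane_iff]
  by_contra h
  push_neg at h
  obtain ⟨h1, h2⟩ := h
  apply hμ
  refine ⟨(1 - (1 - 4 * μ ^ 2).re) / 4, ?_, ?_⟩
  · have : (1 - 4 * μ ^ 2).re ≤ 0 := h1
    linarith
  · have hw : (1 - 4 * μ ^ 2) = ((1 - 4 * μ ^ 2).re : ℂ) := by
      apply Complex.ext <;> simp [h2]
    have : 4 * μ ^ 2 = 1 - ((1 - 4 * μ ^ 2).re : ℂ) := by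
      linear_combination -hw
    push_cast
    linear_combination this / 4

theorem stmt_6 (U : Set ℂ) (hU : U = {μ : ℂ | ¬ ∃ t : ℝ, (1/4 : ℝ) ≤ t ∧ μ ^ 2 = (t : ℂ)}) :
    DifferentiableOn ℂ zminus U ∧ zminus 0 = 0 ∧ deriv zminus 0 = 1 ∧
      ∀ μ ∈ U, μ ≠ 0 → zminus μ ^ 2 - zminus μ / μ + 1 = 0 := by
  have hzero : (0 : ℂ) ∈ U := by
    rw [hU]
    rintro ⟨t, ht, h⟩
    have : (t : ℂ) = 0 := by simpa using h.symm
    have : t = 0 := by exact_mod_cast this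
    linarith
  -- derivative pieces
  have hbase : ∀ μ : ℂ, HasDerivAt (fun x : ℂ => 1 - 4 * x ^ 2) (-(4 * (2 * μ))) μ := by
    intro μ
    have h := ((hasDerivAt_pow 2 μ).const_mul (4 : ℂ)).const_sub 1
    simpa using h
  have hden : ∀ μ ∈ U, HasDerivAt
      (fun x : ℂ => 1 + (1 - 4 * x ^ 2) ^ ((1 : ℂ) / 2))
      (((1 : ℂ) / 2) * (1 - 4 * μ ^ 2) ^ ((1 : ℂ) / 2 - 1) * (-(4 * (2 * μ)))) μ := by
    intro μ hμ
    exact ((hbase μ).cpow_const (slit_of_mem U hU hμ)).const_add 1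
  have hdiff : ∀ μ ∈ U, μ ≠ 0 → True := fun _ _ _ => trivial
  have key : ∀ μ ∈ U, DifferentiableAt ℂ zminus μ := by
    intro μ hμ
    have hd : (1 : ℂ) + (1 - 4 * μ ^ 2) ^ ((1 : ℂ) / 2) ≠ 0 := by
      by_cases hμ0 : μ = 0
      · subst hμ0; norm_num
      · exact one_add_sqrt_ne μ hμ0
    have : DifferentiableAt ℂ
        (fun x : ℂ => 2 * x / (1 + (1 - 4 * x ^ 2) ^ ((1 : ℂ) / 2))) μ := by
      apply DifferentiableAt.div
      · exact (differentiable_id.const_mul 2).differentiableAt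
      · exact (hden μ hμ).differentiableAt
      · exact hd
    exact this.congr_of_eventuallyEq (Filter.Eventually.of_forall fun x => zminus_eq x)
  refine ⟨fun μ hμ => (key μ hμ).differentiableWithinAt, by simp [zminus], ?_, ?_⟩
  · -- deriv at 0
    have hnum : HasDerivAt (fun x : ℂ => 2 * x) 2 0 := by
      simpa using (hasDerivAt_id (0 : ℂ)).const_mul (2 : ℂ)
    have hd0 := hden 0 hzero
    have hd0' : (1 : ℂ) + (1 - 4 * (0 : ℂ) ^ 2) ^ ((1 : ℂ) / 2) ≠ 0 := by norm_num
    have hdiv := hnum.div hd0 hd0'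
    have : HasDerivAt zminus
        ((2 * (1 + (1 - 4 * (0:ℂ) ^ 2) ^ ((1 : ℂ) / 2)) -
          2 * 0 * (((1 : ℂ) / 2) * (1 - 4 * (0:ℂ) ^ 2) ^ ((1 : ℂ) / 2 - 1) * (-(4 * (2 * 0))))) /
          (1 + (1 - 4 * (0:ℂ) ^ 2) ^ ((1 : ℂ) / 2)) ^ 2) 0 := by
      apply hdiv.congr_of_eventuallyEq
      exact Filter.Eventually.of_forall fun x => zminus_eq x
    rw [this.deriv]
    norm_num
  · intro μ hμ hμ0
    have hs := sq_sqrt' (1 - 4 * μ ^ 2)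
    set s := (1 - 4 * μ ^ 2) ^ ((1 : ℂ) / 2) with hsd
    have h2 : ((2 : ℂ) * μ) ≠ 0 := mul_ne_zero two_ne_zero hμ0
    have h4 : ((2 : ℂ) * μ) ^ 2 ≠ 0 := pow_ne_zero 2 h2
    rw [zminus, if_neg hμ0, div_pow, div_div]
    have e2 : (1 - s) / (2 * μ * μ) = (2 * (1 - s)) / (2 * μ) ^ 2 := by
      rw [div_eq_div_iff (mul_ne_zero h2 hμ0) h4]; ring
    rw [e2, ← sub_div, add_eq_zero_iff_eq_neg, div_eq_iff h4]
    linear_combination hs
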